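/- Let ς and ς′ be non-unilateral configurations in ℝ^d (no d+1 points of which lie on a common hyperplane) with ς′ ⊆ ς and #(ς \ ς′) = m < ∞. Then for every k ∈ ℕ, C_{k+m}(ς) ⊆ C_k(ς′) ⊆ C_k(ς), where C_k denotes the k-th convex hull of the peeling procedure. -/

import Mathlib

open Set MeasureTheory Filter Topology ProbabilityTheory Pointwise

noncomputable section

abbrev Euc (d : ℕ) := EuclideanSpace ℝ (Fin d)

/-- The iterated "interior point" configurations of the peeling procedure:
`peelSet ς 0 = ς` and `peelSet ς (n+1)` consists of the points of `peelSet ς n`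
not on the boundary of its convex hull. -/
def peelSet {d : ℕ} (ς : Set (Euc d)) : ℕ → Set (Euc d)
  | 0 => ς
  | n + 1 => {x ∈ peelSet ς n | x ∉ frontier (convexHull ℝ (peelSet ς n))}

/-- `peelHull ς n` is the `(n+1)`-st convex hull `C_{n+1}(ς)` of the peeling procedure. -/
def peelHull {d : ℕ} (ς : Set (Euc d)) (n : ℕ) : Set (Euc d) :=
  convexHull ℝ (peelSet ς n)

/-- A configuration: countable with finitely many points outside each ball around 0. -/
def IsConfiguration {d : ℕ} (ς : Set (Euc d)) : Prop :=
  ς.Countable ∧ ∀ δ : ℝ, 0 < δ → {x ∈ ς | δ ≤ ‖x‖}.Finite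

/-- No `d+1` points of `ς` lie on a common hyperplane. -/
def GeneralPosition {d : ℕ} (ς : Set (Euc d)) : Prop :=
  ∀ s : Finset (Euc d), ↑s ⊆ ς → s.card = d + 1 →
    ¬ ∃ (f : Euc d →ₗ[ℝ] ℝ) (c : ℝ), f ≠ 0 ∧ ∀ x ∈ s, f x = c

/-- Non-unilateral configuration: every peel contains `0` as interior point. -/
def NonUnilateral {d : ℕ} (ς : Set (Euc d)) : Prop :=
  ∀ k : ℕ, (0 : Euc d) ∈ interior (peelHull ς k)

/-- `pts` is a Poisson point process with intensity `μ`: counts in sets of finite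
intensity are Poisson distributed and counts in disjoint sets are independent. -/
def IsPoissonPP {Ω : Type*} [MeasurableSpace Ω] (P : Measure Ω)
    {E : Type*} [MeasurableSpace E] (pts : Ω → Set E) (μ : Measure E) : Prop :=
  (∀ s : Set E, MeasurableSet s → μ s ≠ ⊤ →
      (∀ᵐ ω ∂P, (pts ω ∩ s).Finite) ∧
      ∀ k : ℕ, P {ω | (pts ω ∩ s).ncard = k} =
        ENNReal.ofReal (Real.exp (-(μ s).toReal) * (μ s).toReal ^ k / (Nat.factorial k))) ∧
  (∀ n : ℕ, ∀ s : Fin n → Set E, (∀ i, MeasurableSet (s i)) →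
      Pairwise (Function.onFun Disjoint s) →
      iIndepFun (fun i ω => (pts ω ∩ s i).ncard) P)

/-- The radial measure on `(0,∞)` with density `α r^{-α-1}`. -/
def radialMeasure (α : ℝ) : Measure ℝ :=
  ((volume : Measure ℝ).restrict (Ioi 0)).withDensity fun r => ENNReal.ofReal (α * r ^ (-α - 1))

/-- The intensity measure `θ × ν` transported to `ℝ^d \ {0}` via polar coordinates. -/
def intensityMeasure {d : ℕ} (α : ℝ) (ν : Measure (Metric.sphere (0 : Euc d) 1)) :
    Measure (Euc d) :=
  Measure.map (fun p : ℝ × Metric.sphere (0 : Euc d) 1 => p.1 • (p.2 : Euc d))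
    ((radialMeasure α).prod ν)

/-- i.i.d. sequence of standard (rate 1) exponential random variables. -/
def IsIIDExp {Ω : Type*} [MeasurableSpace Ω] (P : Measure Ω) (γ : ℕ → Ω → ℝ) : Prop :=
  iIndepFun γ P ∧ ∀ i, Measure.map (γ i) P = expMeasure 1


/-- Atomic intensity measure: superposition of radial measures on the rays `t • e i`. -/
def atomicIntensity {d l : ℕ} (α : ℝ) (ν : Fin l → ℝ) (e : Fin l → Euc d) : Measure (Euc d) :=
  Measure.sum fun i : Fin l =>
    (ENNReal.ofReal (ν i)) • Measure.map (fun r : ℝ => r • e i) (radialMeasure α)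

/-- Positive cone generated by a finite family of vectors. -/
def posCone {d l : ℕ} (e : Fin l → Euc d) : Set (Euc d) :=
  {x | ∃ c : Fin l → ℝ, (∀ i, 0 ≤ c i) ∧ x = ∑ i, c i • e i}

/-- The configuration formed by the points `ν_i^{1/α} Γ_{k+1}^{-1/α} e_i`. -/
def rayConfig {d l : ℕ} (α : ℝ) (ν : Fin l → ℝ) (e : Fin l → Euc d)
    {Ω : Type*} (γ : Fin l → ℕ → Ω → ℝ) (ω : Ω) : Set (Euc d) :=
  ⋃ i : Fin l, Set.range fun k : ℕ =>
    ((ν i) ^ (1/α) * (∑ j ∈ Finset.range (k+1), γ i j ω) ^ (-(1/α))) • e i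

/-- maximal norm over a set. -/
def maxNorm {d : ℕ} (A : Set (Euc d)) : ℝ := sSup ((fun x => ‖x‖) '' A)

/-
Adding a single point `p` to a configuration delays the peeling by at most one step. As long
as `p` survives the peeling of `insert p σ`, the other surviving points also survive the
peeling of `σ`; and a point interior to the hull of `insert p S`, with `S` nonempty, lies in the
hull of `S`. Hence the `(k+1)`-st layer of `insert p σ` lies in the hull of the `k`-th layer of
`σ`. Removing the `m` points of `ς \ ς'` one at a time gives the first inclusion; the second
is monotonicity of peeling.
-/

section PeelStep

variable {E : Type*} [AddCommGroup E] [Module ℝ E] [TopologicalSpace E]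

def peelStep (S : Set E) : Set E := {x ∈ S | x ∈ interior (convexHull ℝ S)}

theorem peelStep_subset (S : Set E) : peelStep S ⊆ S := fun _ hx => hx.1

theorem peelStep_mono {S T : Set E} (h : S ⊆ T) : peelStep S ⊆ peelStep T :=
  fun _ hx => ⟨h hx.1, interior_mono (convexHull_mono h) hx.2⟩

variable [ContinuousAdd E] [ContinuousSMul ℝ E]

theorem mem_convexHull_of_mem_interior_convexHull_insert {A : Set E} {p : E} (hA : A.Nonempty)
    (hp : p ∈ interior (convexHull ℝ (insert p A))) : p ∈ convexHull ℝ A := by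
  obtain ⟨a, ha⟩ := hA
  have hline : Filter.Tendsto (fun t : ℝ => p + t • (p - a)) (𝓝[>] 0) (𝓝 p) := by
    have : Continuous (fun t : ℝ => p + t • (p - a)) := by fun_prop
    simpa using (this.tendsto 0).mono_left nhdsWithin_le_nhds
  obtain ⟨ε, hq : p + ε • (p - a) ∈ convexHull ℝ (insert p A), hε : 0 < ε⟩ :=
    ((hline.eventually (mem_interior_iff_mem_nhds.mp hp)).and self_mem_nhdsWithin).exists
  rw [convexHull_insert ⟨a, ha⟩] at hq
  obtain ⟨x, hx, b, hb, α, β, -, hβ, hαβ, hq⟩ := mem_convexJoin.mp hq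
  rw [mem_singleton_iff.mp hx] at hq
  -- Extending `[a, p]` slightly beyond `p` lands on a segment `[p, b]`, so `p ∈ [a, b]`.
  have key : (β + ε) • p = β • b + ε • a := by
    linear_combination (norm := module) -hq + hαβ • p
  have hpos : 0 < β + ε := by positivity
  convert (convex_convexHull ℝ A) hb (subset_convexHull ℝ A ha)
    (div_nonneg hβ hpos.le) (div_nonneg hε.le hpos.le) (by field_simp) using 1
  rw [div_eq_inv_mul, div_eq_inv_mul, mul_smul, mul_smul, ← smul_add, ← key, smul_smul,
    inv_mul_cancel₀ hpos.ne', one_smul]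

theorem mem_convexHull_of_mem_peelStep {S T : Set E} {p : E} (hS : S.Nonempty)
    (hT : T ⊆ insert p S) (hp : p ∈ peelStep T) : p ∈ convexHull ℝ S :=
  mem_convexHull_of_mem_interior_convexHull_insert hS (interior_mono (convexHull_mono hT) hp.2)

theorem peelStep_subset_insert_peelStep {S T : Set E} {p : E} (hS : S.Nonempty)
    (hT : T ⊆ insert p S) (hp : p ∈ peelStep T) : peelStep T ⊆ insert p (peelStep S) := by
  have hull_le : convexHull ℝ T ⊆ convexHull ℝ S :=
    convexHull_min (hT.trans (insert_subset (mem_convexHull_of_mem_peelStep hS hT hp)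
      (subset_convexHull ℝ S))) (convex_convexHull ℝ S)
  rintro x ⟨hxT, hx⟩
  exact (hT hxT).imp_right fun hxS => ⟨hxS, interior_mono hull_le hx⟩

end PeelStep

section Peeling

variable {d : ℕ}

theorem peelSet_succ (ς : Set (Euc d)) (n : ℕ) : peelSet ς (n + 1) = peelStep (peelSet ς n) := by
  ext x
  simp only [peelSet, peelStep, mem_ofPred_eq, frontier, Set.mem_sdiff, not_and, not_not]
  exact and_congr_right fun hx => imp_iff_right (subset_closure (subset_convexHull ℝ _ hx))

theorem peelSet_succ_subset (ς : Set (Euc d)) (n : ℕ) : peelSet ς (n + 1) ⊆ peelSet ς n :=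
  peelSet_succ ς n ▸ peelStep_subset _

theorem peelSet_mono {σ τ : Set (Euc d)} (h : σ ⊆ τ) (n : ℕ) : peelSet σ n ⊆ peelSet τ n := by
  induction n with
  | zero => exact h
  | succ n ih => simpa only [peelSet_succ] using peelStep_mono ih

theorem peelHull_mono {σ τ : Set (Euc d)} (h : σ ⊆ τ) (n : ℕ) : peelHull σ n ⊆ peelHull τ n :=
  convexHull_mono (peelSet_mono h n)

variable {σ : Set (Euc d)} {p : Euc d}

theorem peelSet_insert_subset_of_mem (hσ : ∀ n, (peelSet σ n).Nonempty) {n : ℕ}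
    (hp : p ∈ peelSet (insert p σ) n) : peelSet (insert p σ) n ⊆ insert p (peelSet σ n) := by
  induction n with
  | zero => exact subset_rfl
  | succ n ih =>
    simp only [peelSet_succ] at hp ⊢
    exact peelStep_subset_insert_peelStep (hσ n) (ih (peelStep_subset _ hp)) hp

theorem peelSet_insert_succ_subset (hσ : ∀ n, (peelSet σ n).Nonempty) (n : ℕ) :
    peelSet (insert p σ) (n + 1) ⊆ insert p (peelSet σ n) := by
  induction n with
  | zero => exact peelSet_succ_subset _ 0
  | succ n ih =>
    by_cases hp : p ∈ peelSet (insert p σ) (n + 1)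
    · exact (peelSet_succ_subset _ _).trans (peelSet_insert_subset_of_mem hσ hp)
    · have h : peelSet (insert p σ) (n + 1) ⊆ peelSet σ n := fun x hx =>
        (ih hx).resolve_left fun hxp => hp (hxp ▸ hx)
      rw [peelSet_succ, peelSet_succ σ]
      exact (peelStep_mono h).trans (subset_insert _ _)

theorem peelHull_insert_succ_subset (hσ : ∀ n, (peelSet σ n).Nonempty) (n : ℕ) :
    peelHull (insert p σ) (n + 1) ⊆ peelHull σ n := by
  refine convexHull_min (fun x hx => ?_) (convex_convexHull ℝ _)
  rcases peelSet_insert_succ_subset hσ n hx with rfl | hxσ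
  · rw [peelSet_succ] at hx
    exact mem_convexHull_of_mem_peelStep (hσ n)
      (peelSet_insert_subset_of_mem hσ (peelStep_subset _ hx)) hx
  · exact subset_convexHull ℝ _ hxσ

theorem peelHull_union_subset (hσ : ∀ n, (peelSet σ n).Nonempty) {F : Set (Euc d)}
    (hF : F.Finite) (n : ℕ) : peelHull (σ ∪ F) (n + F.ncard) ⊆ peelHull σ n := by
  induction F, hF using Set.Finite.induction_on generalizing n with
  | empty => simp
  | @insert a F ha hF ih =>
    have hσF : ∀ n, (peelSet (σ ∪ F) n).Nonempty := fun n =>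
      (hσ n).mono (peelSet_mono subset_union_left n)
    rw [ncard_insert_of_notMem ha hF, union_insert, ← add_assoc]
    exact (peelHull_insert_succ_subset hσF _).trans (ih n)

end Peeling

theorem peelHull_sandwich_general {d : ℕ} (ς ς' : Set (Euc d))
    (hnu' : NonUnilateral ς')
    (hsub : ς' ⊆ ς) (m : ℕ) (hfin : (ς \ ς').Finite) (hm : (ς \ ς').ncard = m) :
    ∀ k : ℕ, peelHull ς (k + m) ⊆ peelHull ς' k ∧ peelHull ς' k ⊆ peelHull ς k := by
  have hne : ∀ n, (peelSet ς' n).Nonempty := fun n =>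
    convexHull_nonempty_iff.mp ⟨0, interior_subset (hnu' n)⟩
  intro k
  refine ⟨?_, peelHull_mono hsub k⟩
  simpa only [union_sdiff_cancel hsub, hm] using peelHull_union_subset hne hfin k

/-- sandwich lemma for peeling after removing `m` points. -/
theorem peelHull_sandwich {d : ℕ} (ς ς' : Set (Euc d))
    (hς : IsConfiguration ς) (hς' : IsConfiguration ς')
    (hgp : GeneralPosition ς) (hgp' : GeneralPosition ς')
    (hnu : NonUnilateral ς) (hnu' : NonUnilateral ς')
    (hsub : ς' ⊆ ς) (m : ℕ) (hfin : (ς \ ς').Finite) (hm : (ς \ ς').ncard = m) :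
    ∀ k : ℕ, peelHull ς (k + m) ⊆ peelHull ς' k ∧ peelHull ς' k ⊆ peelHull ς k :=
  peelHull_sandwich_general ς ς' hnu' hsub m hfin hm

end
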